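/- arXiv:2210.16912 — 3 statements merged into one kernel-verified Lean document; each statement's English description precedes it below -/
import Mathlib

section
/- For every real number α > 0, the cubic equation x³ − (3α − 2)x² − (2α − 3)x − α = 0 has exactly one positive real solution; that is, there exists a unique x ∈ ℝ with x > 0 and x³ − (3α − 2)x² − (2α − 3)x − α = 0. -/
/-- For every real `α > 0`, the cubic `x³ − (3α − 2)x² − (2α − 3)x − α = 0` has exactly
one positive real solution. -/
theorem stmt_0 (α : ℝ) (hα : 0 < α) :
    ∃! x : ℝ, 0 < x ∧ x ^ 3 - (3 * α - 2) * x ^ 2 - (2 * α - 3) * x - α = 0 := by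
  -- existence via IVT
  set f : ℝ → ℝ := fun x => x ^ 3 - (3 * α - 2) * x ^ 2 - (2 * α - 3) * x - α with hf
  have hcont : Continuous f := by fun_prop
  have h0 : f 0 = -α := by simp [hf]
  set M : ℝ := 3 * α + 3 with hM
  have hfM : 0 < f M := by
    simp only [hf, hM]
    nlinarith [sq_nonneg α, mul_pos hα hα, mul_pos (mul_pos hα hα) hα]
  have hmem : (0:ℝ) ∈ Set.Ioo (f 0) (f M) := by
    constructor
    · rw [h0]; linarith
    · exact hfM
  have hsub := intermediate_value_Ioo (by positivity : (0:ℝ) ≤ M) hcont.continuousOn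
  obtain ⟨x, hxI, hfx⟩ := hsub hmem
  refine ⟨x, ⟨hxI.1, hfx⟩, ?_⟩
  rintro y ⟨hy, hey⟩
  have hx : 0 < x := hxI.1
  have hex : x ^ 3 - (3 * α - 2) * x ^ 2 - (2 * α - 3) * x - α = 0 := hfx
  -- uniqueness: (y - x) * Q = 0 with Q > 0
  have key : (y - x) * (3 + 2*x + x^2 + 2*y - 4*y*x + 2*y*x^2 + y^2 + 2*y^2*x + 3*y^2*x^2) = 0 := by
    linear_combination (3*x^2 + 2*x + 1) * hey - (3*y^2 + 2*y + 1) * hex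
  have hQ : 0 < 3 + 2*x + x^2 + 2*y - 4*y*x + 2*y*x^2 + y^2 + 2*y^2*x + 3*y^2*x^2 := by
    nlinarith [mul_nonneg hy.le (sq_nonneg (1 - x)), mul_pos (mul_pos hy hy) hx, sq_nonneg y, sq_nonneg x, mul_pos hy hy]
  have := mul_eq_zero.mp key
  rcases this with h | h
  · linarith
  · exact absurd h (ne_of_gt hQ)
end

section
/- There do not exist a real number α and positive real numbers k₁, k₂, k₃ such that k₁ + k₂ + k₃ = 3α − 2, k₁k₂ + k₁k₃ + k₂k₃ = 3 − 2α, and k₁k₂k₃ = α. Equivalently, for no real α does the cubic x³ − (3α − 2)x² − (2α − 3)x − α have three positive real roots counted with multiplicity. -/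
/-- There is no real `α` for which the cubic `x³ − (3α − 2)x² − (2α − 3)x − α` has three
positive real roots (counted with multiplicity), i.e. no `α` and positive `k₁, k₂, k₃`
satisfying the Vieta identities. -/
theorem stmt_2 :
    ¬ ∃ (α k₁ k₂ k₃ : ℝ), 0 < k₁ ∧ 0 < k₂ ∧ 0 < k₃ ∧
      k₁ + k₂ + k₃ = 3 * α - 2 ∧
      k₁ * k₂ + k₁ * k₃ + k₂ * k₃ = 3 - 2 * α ∧
      k₁ * k₂ * k₃ = α := by
  rintro ⟨α, a, b, c, ha, hb, hc, h1, h2, h3⟩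
  nlinarith [sq_nonneg (a-b), sq_nonneg (b-c), sq_nonneg (a-c), sq_nonneg (a+b+c),
    mul_pos ha hb, mul_pos hb hc, mul_pos ha hc, sq_nonneg (a+b+c-3),
    mul_pos (mul_pos ha hb) hc, mul_nonneg (mul_nonneg ha.le hb.le) (sq_nonneg (a-b)),
    mul_nonneg (mul_nonneg hb.le hc.le) (sq_nonneg (b-c)),
    mul_nonneg (mul_nonneg ha.le hc.le) (sq_nonneg (a-c)),
    mul_nonneg ha.le (sq_nonneg (b-c)), mul_nonneg hb.le (sq_nonneg (a-c)),
    mul_nonneg hc.le (sq_nonneg (a-b))]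
end

section
/- Let λ, μ, λ', μ' be positive real numbers satisfying the two equations (λ+1)/2 + λμ²/(λ+μ)² = (λ'+1)/2 + λ'μ'²/(λ'+μ')² and (μ+1)/2 + λ²μ/(λ+μ)² = (μ'+1)/2 + λ'²μ'/(λ'+μ')². Then λ = λ' and μ = μ'. -/
/-!
Write `s = λ + μ`, `d = λ - μ` and `t = λμ / s² ∈ (0, 1/4]`. Adding and subtracting the two
equations turns them into `s (1/2 + t) = s' (1/2 + t')` and `d (1/2 - t) = d' (1/2 - t')`.
Since `d² = s² (1 - 4t)`, the square of the quotient of these two quantities is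
`(1 - 4t) ((1/2 - t) / (1/2 + t))²`, a strictly decreasing function of `t` on `[0, 1/4]`;
hence `t = t'`, and then `s = s'` and `d = d'`.
-/

open Set

noncomputable def curvatureRatio (t : ℝ) : ℝ :=
  (1 - 4 * t) * ((1 / 2 - t) / (1 / 2 + t)) ^ 2

lemma strictAntiOn_curvatureRatio : StrictAntiOn curvatureRatio (Icc 0 (1 / 4)) := by
  rintro a ⟨ha₀, -⟩ b ⟨hb₀, hb₁⟩ hab
  have hq : (1 / 2 - b) / (1 / 2 + b) < (1 / 2 - a) / (1 / 2 + a) := by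
    rw [div_lt_div_iff₀ (by linarith) (by linarith)]
    nlinarith
  have hqb : 0 ≤ (1 / 2 - b) / (1 / 2 + b) := div_nonneg (by linarith) (by linarith)
  calc (1 - 4 * b) * ((1 / 2 - b) / (1 / 2 + b)) ^ 2
      ≤ (1 - 4 * a) * ((1 / 2 - b) / (1 / 2 + b)) ^ 2 := by gcongr
    _ < (1 - 4 * a) * ((1 / 2 - a) / (1 / 2 + a)) ^ 2 := by
      gcongr
      linarith

lemma curvatureRatio_eq {s d t : ℝ} (hs : s ≠ 0)
    (hd : d ^ 2 = s ^ 2 * (1 - 4 * t)) :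
    curvatureRatio t = (d * (1 / 2 - t) / (s * (1 / 2 + t))) ^ 2 := by
  rw [curvatureRatio, div_pow, div_pow, mul_pow, mul_pow, hd]
  field_simp

lemma eq_of_mul_eq_of_mul_eq {s d t s' d' t' : ℝ} (hs : s ≠ 0) (hs' : s' ≠ 0)
    (ht : t ∈ Icc 0 (1 / 4)) (ht' : t' ∈ Icc 0 (1 / 4))
    (hd : d ^ 2 = s ^ 2 * (1 - 4 * t)) (hd' : d' ^ 2 = s' ^ 2 * (1 - 4 * t'))
    (hsum : s * (1 / 2 + t) = s' * (1 / 2 + t'))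
    (hdiff : d * (1 / 2 - t) = d' * (1 / 2 - t')) :
    s = s' ∧ d = d' := by
  have htt : t = t' := by
    refine strictAntiOn_curvatureRatio.injOn ht ht' ?_
    rw [curvatureRatio_eq hs hd, curvatureRatio_eq hs' hd', hsum, hdiff]
  subst htt
  exact ⟨mul_right_cancel₀ (by linarith [ht.1]) hsum,
    mul_right_cancel₀ (by linarith [ht.2]) hdiff⟩

lemma mul_div_add_sq_mem_Icc {a b : ℝ} (ha : 0 < a) (hb : 0 < b) :
    a * b / (a + b) ^ 2 ∈ Icc 0 (1 / 4) := by
  refine ⟨by positivity, ?_⟩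
  rw [div_le_iff₀ (by positivity)]
  nlinarith [sq_nonneg (a - b)]

lemma sub_sq_eq_add_sq_mul {a b : ℝ} (hab : a + b ≠ 0) :
    (a - b) ^ 2 = (a + b) ^ 2 * (1 - 4 * (a * b / (a + b) ^ 2)) := by
  field_simp
  ring

/-- The curvature coefficients of the determinant bundle at the origin determine the
parameters `(λ, μ)` of the weighted Bergman module on the bidisc. -/
theorem stmt_4 (lam mu lam' mu' : ℝ) (hlam : 0 < lam) (hmu : 0 < mu)
    (hlam' : 0 < lam') (hmu' : 0 < mu')
    (h1 : (lam + 1) / 2 + lam * mu ^ 2 / (lam + mu) ^ 2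
        = (lam' + 1) / 2 + lam' * mu' ^ 2 / (lam' + mu') ^ 2)
    (h2 : (mu + 1) / 2 + lam ^ 2 * mu / (lam + mu) ^ 2
        = (mu' + 1) / 2 + lam' ^ 2 * mu' / (lam' + mu') ^ 2) :
    lam = lam' ∧ mu = mu' := by
  have hs : lam + mu ≠ 0 := by positivity
  have hs' : lam' + mu' ≠ 0 := by positivity
  obtain ⟨hs_eq, hd_eq⟩ := eq_of_mul_eq_of_mul_eq hs hs'
    (mul_div_add_sq_mem_Icc hlam hmu) (mul_div_add_sq_mem_Icc hlam' hmu')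
    (sub_sq_eq_add_sq_mul hs) (sub_sq_eq_add_sq_mul hs')
    (by linear_combination h1 + h2) (by linear_combination h1 - h2)
  constructor <;> linarith
end
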